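/- Suppose no seller joins the platform in a pure Platform Equilibrium at fee α ∈ [0,1). Then for every seller j, the value v_{i*(j),j} of j's partner in the unconstrained optimal matching satisfies v_{i*(j),j} ≤ (1/(1−α))·v_{i^G(j),j} + v_{i*(j),t(j)}, where i^G(j) is j's partner in the G-constrained optimal matching and t(j) is the seller matched to i*(j) in the G-constrained optimal matching. -/
import Mathlib


open Finset

/-- A matching between buyers `B` and sellers `S` along edges of the bipartite graph `g`:
a set of (buyer, seller) pairs using only allowed edges, with each buyer and each seller
appearing at most once. -/
def IsMatching (B S : Finset ℕ) (g : ℕ → ℕ → Prop) (M : Finset (ℕ × ℕ)) : Prop :=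
  (∀ e ∈ M, e.1 ∈ B ∧ e.2 ∈ S ∧ g e.1 e.2) ∧
  ∀ e ∈ M, ∀ e' ∈ M, e ≠ e' → e.1 ≠ e'.1 ∧ e.2 ≠ e'.2

/-- `W B S g v` is the maximum total weight of a matching between buyers `B` and sellers `S`
along edges of `g`, where the weight of edge (i, j) is `v i j`. -/
noncomputable def W (B S : Finset ℕ) (g : ℕ → ℕ → Prop) (v : ℕ → ℕ → ℝ) : ℝ :=
  sSup {x | ∃ M : Finset (ℕ × ℕ), IsMatching B S g M ∧ x = ∑ e ∈ M, v e.1 e.2}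

lemma bdd_W (B S : Finset ℕ) (g : ℕ → ℕ → Prop) (v : ℕ → ℕ → ℝ) :
    BddAbove {x | ∃ M : Finset (ℕ × ℕ), IsMatching B S g M ∧ x = ∑ e ∈ M, v e.1 e.2} := by
  refine BddAbove.mono ?_ (((B ×ˢ S).powerset.image (fun M => ∑ e ∈ M, v e.1 e.2)).bddAbove)
  rintro x ⟨M, hM, rfl⟩
  simp only [coe_image, Set.mem_image, mem_coe, mem_powerset]
  exact ⟨M, fun e he => mem_product.2 ⟨(hM.1 e he).1, (hM.1 e he).2.1⟩, rfl⟩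

lemma le_W {B S : Finset ℕ} {g : ℕ → ℕ → Prop} {v : ℕ → ℕ → ℝ} {M : Finset (ℕ × ℕ)}
    (hM : IsMatching B S g M) : ∑ e ∈ M, v e.1 e.2 ≤ W B S g v :=
  le_csSup (bdd_W B S g v) ⟨M, hM, rfl⟩

/-- Key per-seller inequality at an equilibrium where no seller joins the platform,
at fee `α ∈ [0,1)`: if seller `j` is matched to buyer `i*` in the unconstrained optimal
matching `Mstar`, to `iG` in the `G`-constrained optimal matching `MG`, and `t` is the
seller matched to `i*` in `MG`, and `j` weakly prefers not to join
(`p_j^off ≥ (1−α)·p_j^on` for the marginal-value prices), then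
`v_{i* j} ≤ (1/(1−α))·v_{iG j} + v_{i* t}`. -/
theorem no_join_value_bound (B S : Finset ℕ) (g : ℕ → ℕ → Prop) (v : ℕ → ℕ → ℝ)
    (hv : ∀ i j, 0 ≤ v i j) (α : ℝ) (hα0 : 0 ≤ α) (hα1 : α < 1)
    (j : ℕ) (hj : j ∈ S)
    (Mstar MG : Finset (ℕ × ℕ))
    (hMstar : IsMatching B S (fun _ _ => True) Mstar)
    (hMstarOpt : ∑ e ∈ Mstar, v e.1 e.2 = W B S (fun _ _ => True) v)
    (hMG : IsMatching B S g MG)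
    (hMGopt : ∑ e ∈ MG, v e.1 e.2 = W B S g v)
    (istar iG t : ℕ)
    (histar : (istar, j) ∈ Mstar) (hiG : (iG, j) ∈ MG) (ht : (istar, t) ∈ MG)
    (hnojoin : (1 - α) * (W B S (fun i j' => g i j' ∨ j' = j) v - W B (S.erase j) g v)
      ≤ W B S g v - W B (S.erase j) g v) :
    v istar j ≤ (1 / (1 - α)) * v iG j + v istar t := by
  have h1α : (0:ℝ) < 1 - α := by linarith
  by_cases hEq : (iG, j) = (istar, t)
  · -- degenerate case: iG = istar, t = j
    obtain ⟨h1, h2⟩ := Prod.mk.injEq .. ▸ hEq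
    subst h1; subst h2
    have hone : (1:ℝ) ≤ 1 / (1 - α) := by
      rw [le_div_iff₀ h1α]; linarith
    nlinarith [hv iG j]
  · have hne := hMG.2 _ hiG _ ht hEq
    -- hne.1 : iG ≠ istar, hne.2 : j ≠ t
    -- M1 : matching for W B (S.erase j) g
    have hM1 : IsMatching B (S.erase j) g (MG.erase (iG, j)) := by
      constructor
      · intro e he
        have he' : e ∈ MG := mem_of_mem_erase he
        obtain ⟨hB, hS, hg⟩ := hMG.1 e he'
        refine ⟨hB, mem_erase.2 ⟨?_, hS⟩, hg⟩
        intro hej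
        exact (hMG.2 e he' _ hiG (ne_of_mem_erase he)).2 hej
      · intro e he e' he'
        exact hMG.2 e (mem_of_mem_erase he) e' (mem_of_mem_erase he')
    have h2 : W B S g v - v iG j ≤ W B (S.erase j) g v := by
      have := le_W (v := v) hM1
      rwa [Finset.sum_erase_eq_sub hiG, hMGopt] at this
    -- M2 : matching for the "on" graph
    have hstar_notin : (istar, j) ∉ MG := by
      intro hmem
      by_cases h : (istar, j) = (iG, j)
      · exact hne.1 (by simpa using h.symm)
      · exact (hMG.2 _ hmem _ hiG h).2 rfl
    have ht_mem : (istar, t) ∈ MG.erase (iG, j) :=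
      mem_erase.2 ⟨fun h => hEq h.symm, ht⟩
    set M2 := insert (istar, j) ((MG.erase (iG, j)).erase (istar, t)) with hM2def
    have hnotin2 : (istar, j) ∉ (MG.erase (iG, j)).erase (istar, t) := by
      intro h; exact hstar_notin (mem_of_mem_erase (mem_of_mem_erase h))
    have hsum2 : ∑ e ∈ M2, v e.1 e.2 = v istar j + (W B S g v - v iG j - v istar t) := by
      rw [hM2def, Finset.sum_insert hnotin2, Finset.sum_erase_eq_sub ht_mem,
        Finset.sum_erase_eq_sub hiG, hMGopt]
    have hM2 : IsMatching B S (fun i j' => g i j' ∨ j' = j) M2 := by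
      constructor
      · intro e he
        rcases mem_insert.1 he with h | h
        · subst h
          exact ⟨(hMstar.1 _ histar).1, hj, Or.inr rfl⟩
        · have he' : e ∈ MG := mem_of_mem_erase (mem_of_mem_erase h)
          obtain ⟨hB, hS, hg⟩ := hMG.1 e he'
          exact ⟨hB, hS, Or.inl hg⟩
      · have key : ∀ e ∈ (MG.erase (iG, j)).erase (istar, t),
            istar ≠ e.1 ∧ j ≠ e.2 := by
          intro e he
          have he' : e ∈ MG := mem_of_mem_erase (mem_of_mem_erase he)
          constructor
          · intro h
            exact (hMG.2 e he' _ ht (ne_of_mem_erase he)).1 h.symm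
          · intro h
            exact (hMG.2 e he' _ hiG (ne_of_mem_erase (mem_of_mem_erase he))).2 h.symm
        intro e he e' he' hee
        rcases mem_insert.1 he with h | h <;> rcases mem_insert.1 he' with h' | h'
        · exact absurd (h.trans h'.symm) hee
        · obtain ⟨k1, k2⟩ := key e' h'
          subst h; exact ⟨k1, k2⟩
        · obtain ⟨k1, k2⟩ := key e h
          subst h'; exact ⟨k1.symm, k2.symm⟩
        · exact hMG.2 e (mem_of_mem_erase (mem_of_mem_erase h)) e'
            (mem_of_mem_erase (mem_of_mem_erase h')) hee
    have h3 : v istar j + (W B S g v - v iG j - v istar t)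
        ≤ W B S (fun i j' => g i j' ∨ j' = j) v := by
      have := le_W (v := v) hM2
      rwa [hsum2] at this
    have key : (1 - α) * (v istar j - v istar t) ≤ v iG j := by
      nlinarith [mul_le_mul_of_nonneg_left h3 h1α.le, mul_le_mul_of_nonneg_left h2 hα0]
    have hdiv : v istar j - v istar t ≤ v iG j / (1 - α) := by
      rw [le_div_iff₀ h1α]; nlinarith [key]
    have : (1 / (1 - α)) * v iG j = v iG j / (1 - α) := by ring
    linarith
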